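/- A face F of the cone C(Δ) generated by (σ × {0}) ∪ (Δ × {1}) in (N ⊕ Z)_Q either is contained in N_Q × {0} (in which case it is a face of σ × {0}), or its slice at height 1, {v : (v,1) ∈ F}, is a face of the polyhedron Δ; this gives a bijection between faces of C(Δ) not contained in N_Q × {0} and nonempty faces of Δ. -/
import Mathlib


noncomputable section

open Classical Pointwise

/-- The convex cone generated by a set `S`. -/
def coneGen {V : Type*} [AddCommGroup V] [Module ℚ V] (S : Set V) : Set V :=
  {x | ∃ f : V →₀ ℚ, (↑f.support : Set V) ⊆ S ∧ (∀ v, 0 ≤ f v) ∧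
        x = f.sum fun v c => c • v}

/-- A face of a cone `C`: the zero locus of a linear functional nonnegative on `C`. -/
def IsConeFace {W : Type*} [AddCommGroup W] [Module ℚ W] (F C : Set W) : Prop :=
  ∃ m : Module.Dual ℚ W, (∀ x ∈ C, 0 ≤ m x) ∧ F = {x ∈ C | m x = 0}

/-- A face of a polyhedron `Δ`: the locus where a linear functional bounded below
on `Δ` attains its minimum value. -/
def IsPolyFace {V : Type*} [AddCommGroup V] [Module ℚ V] (F Δ : Set V) : Prop :=
  ∃ (m : Module.Dual ℚ V) (c : ℚ), (∀ x ∈ Δ, c ≤ m x) ∧ F = {x ∈ Δ | m x = c}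

section Aux
variable {V : Type*} [AddCommGroup V] [Module ℚ V]

lemma coneGen_zero_mem (S : Set V) : (0 : V) ∈ coneGen S :=
  ⟨0, by simp, fun v => le_refl 0, by simp⟩

lemma subset_coneGen (S : Set V) : S ⊆ coneGen S := by
  intro s hs
  refine ⟨Finsupp.single s 1, ?_, ?_, ?_⟩
  · rw [Finsupp.support_single_ne_zero _ one_ne_zero]
    simpa using hs
  · intro v
    rw [Finsupp.single_apply]
    split <;> norm_num
  · rw [Finsupp.sum_single_index (by simp)]; simp

lemma coneGen_add {S : Set V} {x y : V} (hx : x ∈ coneGen S) (hy : y ∈ coneGen S) :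
    x + y ∈ coneGen S := by
  obtain ⟨f, hfs, hf0, rfl⟩ := hx
  obtain ⟨g, hgs, hg0, rfl⟩ := hy
  refine ⟨f + g, ?_, ?_, ?_⟩
  · refine subset_trans (Finset.coe_subset.2 Finsupp.support_add) ?_
    push_cast
    exact Set.union_subset hfs hgs
  · intro v; simpa using add_nonneg (hf0 v) (hg0 v)
  · rw [Finsupp.sum_add_index' (fun a => zero_smul ℚ a) (fun a b c => add_smul b c a)]

lemma coneGen_smul {S : Set V} {a : ℚ} (ha : 0 ≤ a) {x : V} (hx : x ∈ coneGen S) :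
    a • x ∈ coneGen S := by
  obtain ⟨f, hfs, hf0, rfl⟩ := hx
  refine ⟨a • f, ?_, ?_, ?_⟩
  · exact subset_trans (Finset.coe_subset.2 (Finsupp.support_smul (b := a) (g := f))) hfs
  · intro v; simpa using mul_nonneg ha (hf0 v)
  · rw [Finsupp.sum_smul_index (by simp), Finsupp.smul_sum]
    simp [mul_smul]

lemma coneGen_convex (S : Set V) : Convex ℚ (coneGen S) := by
  intro x hx y hy a b ha hb _
  exact coneGen_add (coneGen_smul ha hx) (coneGen_smul hb hy)

lemma coneGen_dual_nonneg {S : Set V} (m : Module.Dual ℚ V) (h : ∀ s ∈ S, 0 ≤ m s) :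
    ∀ x ∈ coneGen S, 0 ≤ m x := by
  rintro x ⟨f, hfs, hf0, rfl⟩
  rw [map_finsuppSum]
  refine Finset.sum_nonneg fun v hv => ?_
  simp only [map_smul, smul_eq_mul]
  exact mul_nonneg (hf0 v) (h v (hfs hv))

end Aux

section Hyper
variable {V : Type*} [AddCommGroup V] [Module ℚ V]

lemma hypercone_mem {σ Δ : Set V}
    (hσ0 : (0:V) ∈ σ) (hσadd : ∀ x ∈ σ, ∀ y ∈ σ, x + y ∈ σ)
    (hσsmul : ∀ a : ℚ, 0 ≤ a → ∀ x ∈ σ, a • x ∈ σ)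
    (hΔconv : Convex ℚ Δ) (hΔσ : ∀ v ∈ Δ, ∀ s ∈ σ, v + s ∈ Δ)
    (x : V × ℚ)
    (hx : x ∈ coneGen ((fun v => (v, (0:ℚ))) '' σ ∪ (fun v => (v, (1:ℚ))) '' Δ)) :
    (x.2 = 0 ∧ x.1 ∈ σ) ∨ (0 < x.2 ∧ ∃ d ∈ Δ, x.1 = x.2 • d) := by
  classical
  obtain ⟨f, hfs, hf0, hxeq⟩ := hx
  rw [Finsupp.sum] at hxeq
  set T1 := f.support.filter (fun p => p.2 = 1) with hT1def
  set T0 := f.support.filter (fun p => ¬ p.2 = 1) with hT0def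
  have hmem0 : ∀ p ∈ T0, p.2 = 0 ∧ p.1 ∈ σ := by
    intro p hp
    obtain ⟨hps, hpn1⟩ := Finset.mem_filter.1 hp
    rcases hfs (Finset.mem_coe.2 hps) with ⟨v, hv, hpv⟩ | ⟨v, hv, hpv⟩
    · constructor
      · rw [← hpv]
      · rw [← hpv]; exact hv
    · exact absurd (by rw [← hpv]) hpn1
  have hmem1 : ∀ p ∈ T1, p.2 = 1 ∧ p.1 ∈ Δ := by
    intro p hp
    obtain ⟨hps, hp1⟩ := Finset.mem_filter.1 hp
    rcases hfs (Finset.mem_coe.2 hps) with ⟨v, hv, hpv⟩ | ⟨v, hv, hpv⟩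
    · exfalso; rw [← hpv] at hp1; norm_num at hp1
    · constructor
      · exact hp1
      · rw [← hpv]; exact hv
  have hsplit : ∀ g : V × ℚ → ℚ → V × ℚ,
      ∑ p ∈ f.support, g p (f p) = ∑ p ∈ T1, g p (f p) + ∑ p ∈ T0, g p (f p) :=
    fun g => (Finset.sum_filter_add_sum_filter_not f.support (fun p => p.2 = 1) _).symm
  have hx2 : x.2 = ∑ p ∈ T1, f p := by
    rw [hxeq, Prod.snd_sum, ← Finset.sum_filter_add_sum_filter_not f.support
      (fun p => p.2 = 1)]
    rw [show (Finset.filter (fun p => p.2 = 1) f.support) = T1 from rfl,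
        show (Finset.filter (fun p => ¬ p.2 = 1) f.support) = T0 from rfl]
    have h1 : ∀ p ∈ T1, (f p • p).2 = f p := by
      intro p hp
      rw [Prod.smul_snd, (hmem1 p hp).1, smul_eq_mul, mul_one]
    have h0 : ∀ p ∈ T0, (f p • p).2 = 0 := by
      intro p hp
      rw [Prod.smul_snd, (hmem0 p hp).1, smul_eq_mul, mul_zero]
    rw [Finset.sum_congr rfl h1, Finset.sum_congr rfl h0, Finset.sum_const_zero, add_zero]
  have hs0 : (∑ p ∈ T0, f p • p.1) ∈ σ := by
    refine Finset.sum_induction _ (· ∈ σ) (fun a b ha hb => hσadd a ha b hb) hσ0 ?_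
    intro p hp
    exact hσsmul _ (hf0 p) _ (hmem0 p hp).2
  have hx1 : x.1 = ∑ p ∈ T1, f p • p.1 + ∑ p ∈ T0, f p • p.1 := by
    rw [hxeq, Prod.fst_sum, ← Finset.sum_filter_add_sum_filter_not f.support
      (fun p => p.2 = 1) (fun p => (f p • p).1)]
    rfl
  rcases Finset.eq_empty_or_nonempty T1 with hT1e | hT1ne
  · left
    constructor
    · rw [hx2, hT1e, Finset.sum_empty]
    · rw [hx1, hT1e, Finset.sum_empty, zero_add]; exact hs0
  · right
    have ht : 0 < ∑ p ∈ T1, f p := by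
      refine Finset.sum_pos (fun p hp => ?_) hT1ne
      have := hf0 p
      have hne : f p ≠ 0 := Finsupp.mem_support_iff.1 (Finset.mem_filter.1 hp).1
      exact lt_of_le_of_ne this (Ne.symm hne)
    set t := ∑ p ∈ T1, f p with htdef
    have htne : t ≠ 0 := ne_of_gt ht
    have hd' : (∑ p ∈ T1, (f p / t) • p.1) ∈ Δ := by
      refine hΔconv.sum_mem (fun p hp => div_nonneg (hf0 p) ht.le) ?_
        (fun p hp => (hmem1 p hp).2)
      rw [← Finset.sum_div, div_self htne]
    have hts : t • (∑ p ∈ T1, (f p / t) • p.1) = ∑ p ∈ T1, f p • p.1 := by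
      rw [Finset.smul_sum]
      refine Finset.sum_congr rfl fun p hp => ?_
      rw [smul_smul, mul_div_cancel₀ _ htne]
    refine ⟨hx2 ▸ ht, (∑ p ∈ T1, (f p / t) • p.1) + t⁻¹ • (∑ p ∈ T0, f p • p.1),
      hΔσ _ hd' _ (hσsmul _ (inv_nonneg.2 ht.le) _ hs0), ?_⟩
    rw [hx1, hx2, smul_add, hts, smul_smul, mul_inv_cancel₀ htne, one_smul]

end Hyper

/-- A face `F` of the cone `C(Δ)` generated by `(σ × {0}) ∪ (Δ × {1})` either is
contained in `N_ℚ × {0}`, in which case it is a face of `σ × {0}`, or its slice at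
height 1 is a nonempty face of the polyhedron `Δ`; moreover `F ↦ {v : (v,1) ∈ F}` is a
bijection between the faces of `C(Δ)` not contained in `N_ℚ × {0}` and the nonempty
faces of `Δ`. -/
theorem faces_of_hypercone
    {V : Type*} [AddCommGroup V] [Module ℚ V] [FiniteDimensional ℚ V]
    (G : Finset V) (σ : Set V) (hσ : σ = coneGen (G : Set V))
    (hsc : σ ∩ (-σ) = {0})
    (S : Finset V) (hS : S.Nonempty) (Δ : Set V)
    (hΔ : Δ = convexHull ℚ (S : Set V) + σ)
    (C : Set (V × ℚ))
    (hC : C = coneGen ((fun v => (v, (0 : ℚ))) '' σ ∪ (fun v => (v, (1 : ℚ))) '' Δ)) :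
    (∀ F : Set (V × ℚ), IsConeFace F C →
      ((F ⊆ {p : V × ℚ | p.2 = 0} → IsConeFace F (σ ×ˢ ({0} : Set ℚ))) ∧
       (¬ F ⊆ {p : V × ℚ | p.2 = 0} →
          IsPolyFace {v : V | (v, (1 : ℚ)) ∈ F} Δ ∧
          ({v : V | (v, (1 : ℚ)) ∈ F}).Nonempty))) ∧
    Set.BijOn (fun F : Set (V × ℚ) => {v : V | (v, (1 : ℚ)) ∈ F})
      {F : Set (V × ℚ) | IsConeFace F C ∧ ¬ F ⊆ {p : V × ℚ | p.2 = 0}}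
      {Gf : Set V | IsPolyFace Gf Δ ∧ Gf.Nonempty} := by
  -- basic cone properties of σ
  have hσ0 : (0:V) ∈ σ := hσ ▸ coneGen_zero_mem _
  have hσadd : ∀ x ∈ σ, ∀ y ∈ σ, x + y ∈ σ := by
    rw [hσ]; exact fun x hx y hy => coneGen_add hx hy
  have hσsmul : ∀ a : ℚ, 0 ≤ a → ∀ x ∈ σ, a • x ∈ σ := by
    rw [hσ]; exact fun a ha x hx => coneGen_smul ha hx
  have hΔconv : Convex ℚ Δ := by
    rw [hΔ]
    exact (convex_convexHull ℚ _).add (hσ ▸ coneGen_convex _)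
  have hΔσ : ∀ v ∈ Δ, ∀ s ∈ σ, v + s ∈ Δ := by
    rw [hΔ]
    rintro v hv s hs
    obtain ⟨w, hw, s', hs', rfl⟩ := Set.mem_add.1 hv
    exact Set.mem_add.2 ⟨w, hw, s' + s, hσadd s' hs' s hs, (add_assoc w s' s).symm⟩
  have hΔne : Δ.Nonempty := by
    obtain ⟨a, ha⟩ := hS
    refine ⟨a + 0, ?_⟩
    rw [hΔ]
    exact Set.add_mem_add (subset_convexHull ℚ _ ha) hσ0
  have hCσ : ∀ s ∈ σ, ((s, (0:ℚ))) ∈ C := by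
    intro s hs
    rw [hC]
    exact subset_coneGen _ (Or.inl ⟨s, hs, rfl⟩)
  have hCΔ : ∀ d ∈ Δ, ((d, (1:ℚ))) ∈ C := by
    intro d hd
    rw [hC]
    exact subset_coneGen _ (Or.inr ⟨d, hd, rfl⟩)
  have hCmem : ∀ x ∈ C, (x.2 = 0 ∧ x.1 ∈ σ) ∨ (0 < x.2 ∧ ∃ d ∈ Δ, x.1 = x.2 • d) := by
    intro x hx
    exact hypercone_mem hσ0 hσadd hσsmul hΔconv hΔσ x (hC ▸ hx)
  have hCsmul : ∀ a : ℚ, 0 ≤ a → ∀ x ∈ C, a • x ∈ C := by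
    rw [hC]; exact fun a ha x hx => coneGen_smul ha hx
  have hCadd : ∀ x ∈ C, ∀ y ∈ C, x + y ∈ C := by
    rw [hC]; exact fun x hx y hy => coneGen_add hx hy
  have hsl : ∀ v : V, ((v, (1:ℚ))) ∈ C ↔ v ∈ Δ := by
    intro v
    constructor
    · intro hv
      rcases hCmem _ hv with ⟨h2, _⟩ | ⟨_, d, hd, hvd⟩
      · norm_num at h2
      · have hvd' : v = d := by simpa using hvd
        rwa [hvd']
    · exact hCΔ v
  have hmsplit : ∀ (m : Module.Dual ℚ (V × ℚ)) (v : V) (t : ℚ),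
      m (v, t) = m (v, 0) + t * m ((0:V), (1:ℚ)) := by
    intro m v t
    have h : (v, t) = (v, (0:ℚ)) + t • ((0:V), (1:ℚ)) := by
      ext <;> simp
    rw [h, map_add, map_smul, smul_eq_mul]
  -- the key fact, used in part 1 and for MapsTo
  have key : ∀ F : Set (V × ℚ), IsConeFace F C → ¬ F ⊆ {p : V × ℚ | p.2 = 0} →
      IsPolyFace {v : V | (v, (1 : ℚ)) ∈ F} Δ ∧ ({v : V | (v, (1 : ℚ)) ∈ F}).Nonempty := by
    rintro F ⟨m, hm, rfl⟩ hFn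
    have hslF : {v : V | (v, (1:ℚ)) ∈ {x ∈ C | m x = 0}} =
        {v ∈ Δ | m.comp (LinearMap.inl ℚ V ℚ) v = -(m ((0:V),(1:ℚ)))} := by
      ext v
      simp only [Set.mem_setOf_eq, LinearMap.comp_apply, LinearMap.inl_apply, hsl v]
      constructor
      · rintro ⟨hvΔ, hv0⟩
        rw [hmsplit m v 1, one_mul] at hv0
        exact ⟨hvΔ, by linarith⟩
      · rintro ⟨hvΔ, hv0⟩
        refine ⟨hvΔ, ?_⟩
        rw [hmsplit m v 1, one_mul, hv0]
        ring
    constructor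
    · refine ⟨m.comp (LinearMap.inl ℚ V ℚ), -(m ((0:V),(1:ℚ))), ?_, hslF⟩
      intro v hv
      have h1 := hm _ (hCΔ v hv)
      rw [hmsplit m v 1, one_mul] at h1
      simp only [LinearMap.comp_apply, LinearMap.inl_apply]
      linarith
    · -- nonempty
      obtain ⟨x, ⟨hxC, hxm⟩, hx2⟩ := Set.not_subset.1 hFn
      simp only [Set.mem_setOf_eq] at hx2
      rcases hCmem _ hxC with ⟨h2, _⟩ | ⟨hpos, d, hd, hxd⟩
      · exact absurd h2 hx2
      · refine ⟨d, ?_, ?_⟩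
        · exact hCΔ d hd
        · have hxe : x = x.2 • ((d, (1:ℚ))) := by
            ext
            · simpa using hxd
            · simp
          rw [hxe, map_smul, smul_eq_mul] at hxm
          rcases mul_eq_zero.1 hxm with h | h
          · exact absurd h (ne_of_gt hpos)
          · exact h
  refine ⟨?_, ?_⟩
  · -- part 1
    intro F hF
    refine ⟨?_, key F hF⟩
    intro hF0
    obtain ⟨m, hm, rfl⟩ := hF
    refine ⟨m, ?_, ?_⟩
    · rintro ⟨v, t⟩ hx
      obtain ⟨hvσ, ht⟩ := Set.mem_prod.1 hx
      simp only [Set.mem_singleton_iff] at ht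
      subst ht
      exact hm _ (hCσ v hvσ)
    · ext x
      simp only [Set.mem_setOf_eq]
      constructor
      · rintro ⟨hxC, hxm⟩
        have hx2 : x.2 = 0 := hF0 ⟨hxC, hxm⟩
        rcases hCmem _ hxC with ⟨_, h1σ⟩ | ⟨hpos, _⟩
        · exact ⟨Set.mem_prod.2 ⟨h1σ, hx2⟩, hxm⟩
        · exact absurd hx2 (ne_of_gt hpos)
      · rintro ⟨hxp, hxm⟩
        obtain ⟨h1σ, h2⟩ := Set.mem_prod.1 hxp
        simp only [Set.mem_singleton_iff] at h2
        refine ⟨?_, hxm⟩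
        have := hCσ x.1 h1σ
        rwa [show (x.1, (0:ℚ)) = x from Prod.ext rfl h2.symm] at this
  · -- part 2: bijection
    have hinj : ∀ F ∈ {F : Set (V × ℚ) | IsConeFace F C ∧ ¬ F ⊆ {p : V × ℚ | p.2 = 0}},
        ∀ F' ∈ {F : Set (V × ℚ) | IsConeFace F C ∧ ¬ F ⊆ {p : V × ℚ | p.2 = 0}},
        {v : V | (v, (1:ℚ)) ∈ F} = {v : V | (v, (1:ℚ)) ∈ F'} → F ⊆ F' := by
      rintro F ⟨hFface, hFn⟩ F' ⟨hF'face, hF'n⟩ hslice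
      obtain ⟨v₀, hv₀⟩ := (key F hFface hFn).2
      have hv₀' : (v₀, (1:ℚ)) ∈ F' := by
        have : v₀ ∈ {v : V | (v, (1:ℚ)) ∈ F'} := hslice ▸ hv₀
        exact this
      obtain ⟨m, hm, rfl⟩ := hFface
      obtain ⟨m', hm', rfl⟩ := hF'face
      rintro x ⟨hxC, hxm⟩
      rcases hCmem _ hxC with ⟨h2, h1σ⟩ | ⟨hpos, d, hd, hxd⟩
      · -- height 0
        have hxe : x = (x.1, (0:ℚ)) := Prod.ext rfl h2
        have hv₀Δ : v₀ ∈ Δ := (hsl v₀).1 hv₀.1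
        have hmemF : ((v₀ + x.1, (1:ℚ))) ∈ {x ∈ C | m x = 0} := by
          refine ⟨hCΔ _ (hΔσ v₀ hv₀Δ x.1 h1σ), ?_⟩
          have h : ((v₀ + x.1, (1:ℚ))) = (v₀, (1:ℚ)) + (x.1, (0:ℚ)) := by ext <;> simp
          rw [h, map_add, hv₀.2, ← hxe, hxm, add_zero]
        have hmemF' : ((v₀ + x.1, (1:ℚ))) ∈ {x ∈ C | m' x = 0} := by
          have : v₀ + x.1 ∈ {v : V | (v, (1:ℚ)) ∈ {x ∈ C | m x = 0}} := hmemF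
          rw [hslice] at this
          exact this
        refine ⟨hxC, ?_⟩
        have h : ((v₀ + x.1, (1:ℚ))) = (v₀, (1:ℚ)) + (x.1, (0:ℚ)) := by ext <;> simp
        have h2' := hmemF'.2
        rw [h, map_add, hv₀'.2, zero_add] at h2'
        rw [hxe]
        exact h2'
      · -- positive height
        have hxe : x = x.2 • ((d, (1:ℚ))) := by
          ext
          · simpa using hxd
          · simp
        have hd1 : m ((d, (1:ℚ))) = 0 := by
          rw [hxe, map_smul, smul_eq_mul] at hxm
          rcases mul_eq_zero.1 hxm with h | h
          · exact absurd h (ne_of_gt hpos)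
          · exact h
        have hdF : d ∈ {v : V | (v, (1:ℚ)) ∈ {x ∈ C | m x = 0}} := ⟨hCΔ d hd, hd1⟩
        rw [hslice] at hdF
        refine ⟨hxC, ?_⟩
        rw [hxe, map_smul, hdF.2, smul_zero]
    refine ⟨fun F hF => key F hF.1 hF.2, ?_, ?_⟩
    · intro F hF F' hF' h
      exact Set.Subset.antisymm (hinj F hF F' hF' h) (hinj F' hF' F hF h.symm)
    · -- surjective
      rintro Gf ⟨⟨φ, c, hφ, rfl⟩, hGne⟩
      obtain ⟨x₀, hx₀⟩ := hΔne
      have hφσ : ∀ s ∈ σ, 0 ≤ φ s := by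
        intro s hs
        by_contra h
        push_neg at h
        set t := (φ x₀ - c + 1) / (-φ s) with htdef
        have hts : 0 < -φ s := by linarith
        have htpos : 0 ≤ t := div_nonneg (by linarith [hφ x₀ hx₀]) hts.le
        have hmem : x₀ + t • s ∈ Δ := hΔσ x₀ hx₀ _ (hσsmul t htpos s hs)
        have hb := hφ _ hmem
        rw [map_add, map_smul, smul_eq_mul] at hb
        have hcan : t * (-φ s) = φ x₀ - c + 1 := div_mul_cancel₀ _ hts.ne'
        nlinarith
      set m : Module.Dual ℚ (V × ℚ) :=
        φ.comp (LinearMap.fst ℚ V ℚ) - c • (LinearMap.snd ℚ V ℚ) with hmdef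
      have hmval : ∀ (v : V) (t : ℚ), m (v, t) = φ v - c * t := by
        intro v t
        simp [hmdef, smul_eq_mul]
      have hmC : ∀ x ∈ C, 0 ≤ m x := by
        rw [hC]
        refine coneGen_dual_nonneg m ?_
        rintro p (⟨s, hs, rfl⟩ | ⟨d, hd, rfl⟩)
        · rw [hmval]
          simpa using hφσ s hs
        · rw [hmval, mul_one]
          linarith [hφ d hd]
      refine ⟨{x ∈ C | m x = 0}, ⟨⟨m, hmC, rfl⟩, ?_⟩, ?_⟩
      · intro hsub
        obtain ⟨v, hvΔ, hvc⟩ := hGne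
        have : ((v, (1:ℚ))) ∈ {x ∈ C | m x = 0} := by
          refine ⟨hCΔ v hvΔ, ?_⟩
          rw [hmval, mul_one, hvc]
          ring
        have := hsub this
        norm_num at this
      · ext v
        simp only [Set.mem_setOf_eq, hsl v, hmval, mul_one]
        constructor
        · rintro ⟨hvΔ, hv⟩
          exact ⟨hvΔ, by linarith⟩
        · rintro ⟨hvΔ, hv⟩
          exact ⟨hvΔ, by linarith⟩
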